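/- There is an absolute constant C > 0 with the following property. Let Γ ⊂ 𝔻 be a countable union of rectifiable curves such that the one-dimensional Hausdorff (arclength) measure restricted to Γ is a Carleson measure with Carleson norm M. Let {γ_j} be pairwise disjoint subarcs of Γ, each of hyperbolic length ∫_{γ_j} |dw|/(1−|w|²) at least 1, and let ζ_j ∈ γ_j for each j. Then the measure ν = Σ_j (1−|ζ_j|)·δ_{ζ_j} is a Carleson measure with ‖ν‖_C ≤ C·M. -/

import Mathlib

open Complex Metric Set MeasureTheory

/-- The open unit disk in the complex plane. -/
def unitDisk : Set ℂ := Metric.ball 0 1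

/-- A Carleson square with angular center `θ₀` and side length `ℓ`. -/
def carlesonSquare (θ₀ ℓ : ℝ) : Set ℂ :=
  {z | ∃ r θ : ℝ, 0 < 1 - r ∧ 1 - r < ℓ ∧ |θ - θ₀| < Real.pi * ℓ ∧
    z = r * Complex.exp (θ * Complex.I)}

/-- `μ` is a Carleson measure with Carleson norm at most `M`:
`μ(Q) ≤ M ℓ(Q)` for every Carleson square `Q`. -/
def IsCarlesonBound (μ : Measure ℂ) (M : ℝ) : Prop :=
  ∀ θ₀ ℓ : ℝ, θ₀ ∈ Set.Ico 0 (2 * Real.pi) → 0 < ℓ → ℓ < 1 →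
    μ (carlesonSquare θ₀ ℓ) ≤ ENNReal.ofReal (M * ℓ)

/-- A rectifiable curve: a continuous image of `[0,1]` of finite one-dimensional
Hausdorff (arclength) measure. -/
def IsRectifiableCurve (Γ : Set ℂ) : Prop :=
  (∃ γ : ℝ → ℂ, ContinuousOn γ (Set.Icc 0 1) ∧ γ '' Set.Icc 0 1 = Γ) ∧
  (μH[1] : Measure ℂ) Γ < ⊤

/-!
For a point `ζ_j` in a Carleson square `Q`, the part of `γ_j` in the closed ball of radius
`(1 - |ζ_j|)/2` about `ζ_j` has arclength at least that radius: either `γ_j` leaves the ball, and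
connectedness gives the length, or it stays inside, where `1/(1 - |w|²) ≤ 2/(1 - |ζ_j|)`, so
hyperbolic length `≥ 1` forces it. These pieces of `Γ` are disjoint, so `ν(Q)` is at most twice
their total length. If `ℓ(Q) < 1/3` they lie in the Carleson square with the same centre and side
`3ℓ(Q)`, whence `ν(Q) ≤ 6Mℓ(Q)`. Otherwise `ν(Q) ≤ 2|Γ| ≤ 4M`, since two Carleson squares of side
close to `1` cover the disk outside any neighbourhood of `0`.
-/

open Function
open scoped NNReal ENNReal Real

namespace NormedSpace

lemma norm_normalize_sub_normalize_le {V : Type*} [NormedAddCommGroup V] [NormedSpace ℝ V]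
    {x : V} (hx : x ≠ 0) (y : V) :
    ‖normalize x - normalize y‖ ≤ 2 * ‖x - y‖ / ‖x‖ := by
  have hx' : 0 < ‖x‖ := norm_pos_iff.2 hx
  have hsplit :
      normalize x - normalize y = ‖x‖⁻¹ • ((x - y) + (‖y‖ - ‖x‖) • normalize y) := by
    rw [smul_add, sub_smul, smul_sub, norm_smul_normalize, smul_sub, smul_smul,
      inv_mul_cancel₀ hx'.ne', one_smul]
    simp only [normalize]
    abel
  have hy : ‖normalize y‖ ≤ 1 := by
    by_cases hy : y = 0
    · simp [hy]
    · exact (norm_normalize hy).le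
  calc ‖normalize x - normalize y‖
      ≤ ‖x‖⁻¹ * (‖x - y‖ + |‖y‖ - ‖x‖| * 1) := by
        rw [hsplit, norm_smul, norm_inv, norm_norm]
        gcongr
        refine (norm_add_le _ _).trans ?_
        rw [norm_smul, Real.norm_eq_abs]
        gcongr
    _ ≤ ‖x‖⁻¹ * (‖x - y‖ + ‖x - y‖) := by
        rw [mul_one, abs_sub_comm]
        gcongr
        exact abs_norm_sub_norm_le x y
    _ = 2 * ‖x - y‖ / ‖x‖ := by ring

end NormedSpace

namespace Complex

lemma abs_arg_div_le {w ζ : ℂ} (hw : w ≠ 0) (hζ : ζ ≠ 0) :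
    |(w / ζ).arg| ≤ π * ‖w - ζ‖ / ‖w‖ := by
  rw [← angle_eq_abs_arg hw hζ, ← InnerProductGeometry.angle_normalize_left,
    ← InnerProductGeometry.angle_normalize_right]
  calc _ ≤ π / 2 * ‖NormedSpace.normalize w - NormedSpace.normalize ζ‖ :=
        angle_le_mul_norm_sub (NormedSpace.norm_normalize hw) (NormedSpace.norm_normalize hζ)
    _ ≤ π / 2 * (2 * ‖w - ζ‖ / ‖w‖) := by
        gcongr
        exact NormedSpace.norm_normalize_sub_normalize_le hw ζ
    _ = π * ‖w - ζ‖ / ‖w‖ := by ring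

lemma eq_norm_mul_exp_add_arg_div {ζ : ℂ} {r θ : ℝ} (hr : 0 < r) (hζ : ζ = r * exp (θ * I))
    (w : ℂ) : w = ‖w‖ * exp ((θ + (w / ζ).arg : ℝ) * I) := by
  have hζ0 : ζ ≠ 0 := hζ ▸ mul_ne_zero (ofReal_ne_zero.2 hr.ne') (exp_ne_zero _)
  have hnorm : ‖w‖ = r * ‖w / ζ‖ := by
    rw [norm_div, hζ, norm_mul, norm_real, norm_exp_ofReal_mul_I, Real.norm_of_nonneg hr.le]
    field_simp
  calc w = ζ * (‖w / ζ‖ * exp ((w / ζ).arg * I)) := by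
        rw [norm_mul_exp_arg_mul_I, mul_div_cancel₀ _ hζ0]
    _ = ‖w‖ * exp ((θ + (w / ζ).arg : ℝ) * I) := by
        rw [hnorm, hζ]
        push_cast
        rw [add_mul, exp_add]
        ring

end Complex

lemma closedBall_subset_carlesonSquare_three_mul {θ₀ ℓ : ℝ} (hℓ : ℓ < 1 / 3) {ζ : ℂ}
    (hζ : ζ ∈ carlesonSquare θ₀ ℓ) :
    closedBall ζ ((1 - ‖ζ‖) / 2) ⊆ carlesonSquare θ₀ (3 * ℓ) := by
  obtain ⟨r, θ, hr1, hrℓ, hθ, hζr⟩ := hζ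
  have hr0 : 0 < r := by linarith
  have hnorm : ‖ζ‖ = r := by
    rw [hζr, norm_mul, norm_real, norm_exp_ofReal_mul_I, Real.norm_of_nonneg hr0.le, mul_one]
  have hζ0 : ζ ≠ 0 := norm_ne_zero_iff.1 (hnorm.trans_ne hr0.ne')
  intro w hw
  rw [mem_closedBall, dist_eq, hnorm] at hw
  have hlow : r - (1 - r) / 2 ≤ ‖w‖ := by
    have := norm_sub_norm_le ζ w
    rw [hnorm, norm_sub_rev] at this
    linarith
  have hhigh : ‖w‖ ≤ r + (1 - r) / 2 := by
    have := norm_sub_norm_le w ζ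
    rw [hnorm] at this
    linarith
  have hw0 : w ≠ 0 := norm_ne_zero_iff.1 (by linarith)
  -- `‖w‖ > 1 / 2` because `r > 2 / 3`, so the angle moves by at most `π (1 - r) < π ℓ`.
  have harg : |(w / ζ).arg| ≤ π * (1 - r) := by
    have hdist : ‖w - ζ‖ ≤ (1 - r) * ‖w‖ := by nlinarith
    refine (abs_arg_div_le hw0 hζ0).trans ?_
    rw [div_le_iff₀ (by linarith), mul_assoc]
    exact mul_le_mul_of_nonneg_left hdist Real.pi_pos.le
  refine ⟨‖w‖, θ + (w / ζ).arg, by linarith, by linarith, ?_,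
    eq_norm_mul_exp_add_arg_div hr0 hζr w⟩
  calc |θ + (w / ζ).arg - θ₀| ≤ |θ - θ₀| + |(w / ζ).arg| := by
        rw [add_sub_right_comm]; exact abs_add_le _ _
    _ < π * (3 * ℓ) := by nlinarith [Real.pi_pos]

lemma mem_carlesonSquare_union_of_lt_norm {ε : ℝ} (hε : ε < 1 / 3) {w : ℂ} (hεw : ε < ‖w‖)
    (hw : ‖w‖ < 1) :
    w ∈ carlesonSquare (π / 3) (1 - ε) ∪ carlesonSquare (5 * π / 3) (1 - ε) := by
  have hpolar := (norm_mul_exp_arg_mul_I w).symm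
  have := neg_pi_lt_arg w
  have := arg_le_pi w
  -- Arguments in `[0, π]` lie within `2π/3` of `π/3`; negative ones, shifted by `2π`, within
  -- `2π/3` of `5π/3`.
  rcases le_or_gt 0 w.arg with harg | harg
  · refine Or.inl ⟨‖w‖, w.arg, by linarith, by linarith, ?_, hpolar⟩
    rw [abs_sub_lt_iff]
    constructor <;> nlinarith [Real.pi_pos]
  · refine Or.inr ⟨‖w‖, w.arg + 2 * π, by linarith, by linarith, ?_, ?_⟩
    · rw [abs_sub_lt_iff]
      constructor <;> nlinarith [Real.pi_pos]
    · push_cast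
      rw [add_mul, exp_add, exp_two_pi_mul_I, mul_one]
      exact hpolar

section CarlesonMeasure

variable {μ : Measure ℂ} {M : ℝ}

lemma measure_lt_norm_le_of_isCarlesonBound (hM : 0 ≤ M) (hμ : IsCarlesonBound μ M)
    (hdisk : μ unitDiskᶜ = 0) {ε : ℝ} (hε0 : 0 < ε) (hε : ε < 1 / 3) :
    μ {w | ε < ‖w‖} ≤ ENNReal.ofReal (2 * M) := by
  have hcover : {w | ε < ‖w‖} ⊆
      (carlesonSquare (π / 3) (1 - ε) ∪ carlesonSquare (5 * π / 3) (1 - ε)) ∪ unitDiskᶜ := by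
    intro w (hw : ε < ‖w‖)
    by_cases hw1 : ‖w‖ < 1
    · exact Or.inl (mem_carlesonSquare_union_of_lt_norm hε hw hw1)
    · exact Or.inr fun h => hw1 (mem_ball_zero_iff.1 h)
  have hQ : ∀ θ₀ ∈ Ico 0 (2 * π),
      μ (carlesonSquare θ₀ (1 - ε)) ≤ ENNReal.ofReal (M * (1 - ε)) :=
    fun θ₀ hθ₀ => hμ θ₀ (1 - ε) hθ₀ (by linarith) (by linarith)
  calc μ {w | ε < ‖w‖}
      ≤ μ (carlesonSquare (π / 3) (1 - ε)) + μ (carlesonSquare (5 * π / 3) (1 - ε)) +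
          μ unitDiskᶜ :=
        (measure_mono hcover).trans <|
          (measure_union_le _ _).trans (add_le_add_left (measure_union_le _ _) _)
    _ ≤ ENNReal.ofReal (M * (1 - ε)) + ENNReal.ofReal (M * (1 - ε)) + 0 := by
        rw [hdisk]
        gcongr <;> apply hQ <;> constructor <;> linarith [Real.pi_pos]
    _ ≤ ENNReal.ofReal (2 * M) := by
        rw [add_zero, ← ENNReal.ofReal_add (by nlinarith) (by nlinarith)]
        gcongr
        nlinarith

lemma measure_univ_le_of_isCarlesonBound (hM : 0 ≤ M) (hμ : IsCarlesonBound μ M)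
    (h0 : μ {0} = 0) (hdisk : μ unitDiskᶜ = 0) :
    μ univ ≤ ENNReal.ofReal (2 * M) := by
  set A : ℕ → Set ℂ := fun n => {w | 1 / ((n : ℝ) + 4) < ‖w‖}
  have hA : ∀ n, μ (A n) ≤ ENNReal.ofReal (2 * M) := fun n =>
    measure_lt_norm_le_of_isCarlesonBound hM hμ hdisk (by positivity)
      (by rw [div_lt_div_iff₀ (by positivity) three_pos]; linarith [n.cast_nonneg (α := ℝ)])
  have hmono : Monotone A := by
    intro m n hmn w (hw : 1 / ((m : ℝ) + 4) < ‖w‖)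
    exact lt_of_le_of_lt (one_div_le_one_div_of_le (by positivity) (by gcongr)) hw
  have hcompl : univ \ {0} ⊆ ⋃ n, A n := by
    rintro w ⟨-, hw⟩
    obtain ⟨n, hn⟩ := exists_nat_one_div_lt (norm_pos_iff.2 hw)
    exact mem_iUnion.2
      ⟨n, lt_of_le_of_lt (one_div_le_one_div_of_le (by positivity) (by linarith)) hn⟩
  calc μ univ = μ (univ \ {0}) := (measure_sdiff_null h0).symm
    _ ≤ μ (⋃ n, A n) := measure_mono hcompl
    _ = ⨆ n, μ (A n) := hmono.measure_iUnion
    _ ≤ ENNReal.ofReal (2 * M) := iSup_le hA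

end CarlesonMeasure

lemma hausdorffMeasure_le_of_isCarlesonBound {Γ : Set ℂ} (hΓ : Γ ⊆ unitDisk)
    (hΓm : MeasurableSet Γ) {M : ℝ} (hM : 0 ≤ M)
    (hC : IsCarlesonBound ((μH[1] : Measure ℂ).restrict Γ) M) :
    μH[1] Γ ≤ ENNReal.ofReal (2 * M) := by
  have := Measure.nullSingletonClass_hausdorff ℂ one_pos
  have h0 : (μH[1] : Measure ℂ).restrict Γ {0} = 0 :=
    nonpos_iff_eq_zero.1 ((Measure.restrict_le_self _).trans_eq (measure_singleton 0))
  have hdisk : (μH[1] : Measure ℂ).restrict Γ unitDiskᶜ = 0 := by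
    rw [Measure.restrict_apply' hΓm, (disjoint_compl_left_iff_subset.2 hΓ).inter_eq, measure_empty]
  simpa [Measure.restrict_apply' hΓm] using measure_univ_le_of_isCarlesonBound hM hC h0 hdisk

lemma IsPreconnected.ofReal_le_hausdorffMeasure_inter_closedBall {X : Type*} [MetricSpace X]
    [MeasurableSpace X] [BorelSpace X] {K : Set X} (hK : IsPreconnected K) {x y : X}
    (hx : x ∈ K) (hy : y ∈ K) {ρ : ℝ} (hρ : ρ ≤ dist x y) :
    ENNReal.ofReal ρ ≤ μH[1] (K ∩ closedBall x ρ) := by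
  have hlip : LipschitzWith 1 (dist x) := LipschitzWith.dist_right x
  have himage : Icc 0 ρ ⊆ dist x '' (K ∩ closedBall x ρ) := by
    intro t ht
    obtain ⟨z, hzK, rfl⟩ := (hK.image _ hlip.continuous.continuousOn).Icc_subset
      ⟨x, hx, rfl⟩ ⟨y, hy, rfl⟩ ⟨(dist_self x).symm ▸ ht.1, ht.2.trans hρ⟩
    exact ⟨z, ⟨hzK, mem_closedBall'.2 ht.2⟩, rfl⟩
  calc ENNReal.ofReal ρ = μH[1] (Icc (0 : ℝ) ρ) := by
        rw [hausdorffMeasure_real, Real.volume_Icc, sub_zero]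
    _ ≤ μH[1] (dist x '' (K ∩ closedBall x ρ)) := measure_mono himage
    _ ≤ (1 : ℝ≥0) ^ (1 : ℝ) * μH[1] (K ∩ closedBall x ρ) :=
        hlip.hausdorffMeasure_image_le zero_le_one _
    _ = μH[1] (K ∩ closedBall x ρ) := by simp

noncomputable def hyperbolicLength (K : Set ℂ) : ℝ≥0∞ :=
  ∫⁻ w in K, ENNReal.ofReal (1 / (1 - ‖w‖ ^ 2)) ∂(μH[1] : Measure ℂ)

lemma hyperbolicLength_le_of_norm_le {K : Set ℂ} {ρ : ℝ} (hρ : 0 < ρ) (hK : ∀ w ∈ K, ‖w‖ ≤ 1 - ρ) :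
    hyperbolicLength K ≤ ENNReal.ofReal ρ⁻¹ * μH[1] K := by
  calc hyperbolicLength K ≤ ∫⁻ _ in K, ENNReal.ofReal ρ⁻¹ ∂(μH[1] : Measure ℂ) := by
        refine setLIntegral_mono measurable_const fun w hw => ENNReal.ofReal_le_ofReal ?_
        have := hK w hw
        rw [one_div]
        gcongr
        nlinarith [norm_nonneg w]
    _ = ENNReal.ofReal ρ⁻¹ * μH[1] K := setLIntegral_const K _

lemma ofReal_le_hausdorffMeasure_of_one_le_hyperbolicLength {K : Set ℂ} {ρ : ℝ} (hρ : 0 < ρ)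
    (hK : ∀ w ∈ K, ‖w‖ ≤ 1 - ρ) (hlen : 1 ≤ hyperbolicLength K) :
    ENNReal.ofReal ρ ≤ μH[1] K :=
  calc ENNReal.ofReal ρ ≤ ENNReal.ofReal ρ * (ENNReal.ofReal ρ⁻¹ * μH[1] K) :=
        le_mul_of_one_le_right' (hlen.trans (hyperbolicLength_le_of_norm_le hρ hK))
    _ = μH[1] K := by
        rw [← mul_assoc, ← ENNReal.ofReal_mul hρ.le, mul_inv_cancel₀ hρ.ne', ENNReal.ofReal_one,
          one_mul]

lemma IsPreconnected.ofReal_le_hausdorffMeasure_of_one_le_hyperbolicLength {K : Set ℂ}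
    (hK : IsPreconnected K) (hlen : 1 ≤ hyperbolicLength K) {ζ : ℂ} (hζK : ζ ∈ K)
    (hζ : ‖ζ‖ < 1) :
    ENNReal.ofReal ((1 - ‖ζ‖) / 2) ≤ μH[1] (K ∩ closedBall ζ ((1 - ‖ζ‖) / 2)) := by
  set ρ := (1 - ‖ζ‖) / 2
  by_cases hexit : ∃ z ∈ K, ρ ≤ dist ζ z
  · obtain ⟨z, hzK, hz⟩ := hexit
    exact hK.ofReal_le_hausdorffMeasure_inter_closedBall hζK hzK hz
  · push Not at hexit
    have hsub : K ⊆ closedBall ζ ρ := fun z hz => mem_closedBall'.2 (hexit z hz).le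
    rw [inter_eq_self_of_subset_left hsub]
    refine _root_.ofReal_le_hausdorffMeasure_of_one_le_hyperbolicLength (half_pos (sub_pos.2 hζ))
      (fun w hw => ?_) hlen
    have := norm_le_norm_add_norm_sub' w ζ
    have := mem_closedBall.1 (hsub hw)
    rw [dist_eq] at this
    simp only [ρ] at *
    linarith

lemma sum_dirac_apply_le_two_mul_hausdorffMeasure {ι : Type*} [Countable ι] {γ : ι → Set ℂ}
    {ζ : ι → ℂ} (hγm : ∀ j, MeasurableSet (γ j)) (hγc : ∀ j, IsPreconnected (γ j))
    (hdisj : Pairwise (Disjoint on γ)) (hlen : ∀ j, 1 ≤ hyperbolicLength (γ j))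
    (hζγ : ∀ j, ζ j ∈ γ j) (hζ : ∀ j, ‖ζ j‖ < 1) {S T : Set ℂ}
    (hT : ∀ j, ζ j ∈ S → γ j ∩ closedBall (ζ j) ((1 - ‖ζ j‖) / 2) ⊆ T) :
    Measure.sum (fun j => ENNReal.ofReal (1 - ‖ζ j‖) • Measure.dirac (ζ j)) S ≤ 2 * μH[1] T := by
  set E : ι → Set ℂ := fun j => ⋃ (_ : ζ j ∈ S), γ j ∩ closedBall (ζ j) ((1 - ‖ζ j‖) / 2)
  have hEm : ∀ j, MeasurableSet (E j) := fun j =>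
    MeasurableSet.iUnion fun _ => (hγm j).inter measurableSet_closedBall
  have hEdisj : Pairwise (Disjoint on E) := fun i j hij =>
    (hdisj hij).mono (iUnion_subset fun _ => inter_subset_left)
      (iUnion_subset fun _ => inter_subset_left)
  have hterm : ∀ j, ENNReal.ofReal (1 - ‖ζ j‖) * S.indicator 1 (ζ j) ≤ 2 * μH[1] (E j) := by
    intro j
    by_cases hj : ζ j ∈ S
    · simp only [E, indicator_of_mem hj, Pi.one_apply, mul_one, hj, iUnion_true]
      calc ENNReal.ofReal (1 - ‖ζ j‖) = 2 * ENNReal.ofReal ((1 - ‖ζ j‖) / 2) := by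
            rw [← ENNReal.ofReal_ofNat 2, ← ENNReal.ofReal_mul zero_le_two,
              mul_div_cancel₀ _ two_ne_zero]
        _ ≤ 2 * μH[1] (γ j ∩ closedBall (ζ j) ((1 - ‖ζ j‖) / 2)) := by
            gcongr
            exact (hγc j).ofReal_le_hausdorffMeasure_of_one_le_hyperbolicLength (hlen j) (hζγ j)
              (hζ j)
    · simp [indicator_of_notMem hj]
  calc Measure.sum (fun j => ENNReal.ofReal (1 - ‖ζ j‖) • Measure.dirac (ζ j)) S
      = ∑' j, ENNReal.ofReal (1 - ‖ζ j‖) * S.indicator 1 (ζ j) := by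
        simp only [Measure.sum_apply_of_countable, Measure.smul_apply, Measure.dirac_apply,
          smul_eq_mul]
    _ ≤ ∑' j, 2 * μH[1] (E j) := ENNReal.tsum_le_tsum hterm
    _ = 2 * μH[1] (⋃ j, E j) := by rw [ENNReal.tsum_mul_left, measure_iUnion hEdisj hEm]
    _ ≤ 2 * μH[1] T := by gcongr; exact iUnion₂_subset hT

lemma IsRectifiableCurve.isCompact {Γ : Set ℂ} (hΓ : IsRectifiableCurve Γ) : IsCompact Γ := by
  obtain ⟨⟨g, hg, rfl⟩, -⟩ := hΓ
  exact isCompact_Icc.image_of_continuousOn hg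

/-- There is an absolute constant `C > 0` such that: if `Γ ⊆ 𝔻` is a countable union
of rectifiable curves whose arclength measure is Carleson with norm `M`, `{γ_j}` are
pairwise disjoint (compact, connected) subarcs of `Γ` each of hyperbolic length
`∫_{γ_j} |dw|/(1-|w|²)` at least `1`, and `ζ_j ∈ γ_j`, then
`ν = Σ_j (1-|ζ_j|) δ_{ζ_j}` is a Carleson measure with `‖ν‖_C ≤ C·M`. -/
theorem discretization_carleson :
    ∃ C : ℝ, 0 < C ∧
      ∀ (Γ : Set ℂ), Γ ⊆ unitDisk →
      (∃ c : ℕ → Set ℂ, Γ = ⋃ n, c n ∧ ∀ n, IsRectifiableCurve (c n)) →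
      ∀ M : ℝ, 0 ≤ M →
      IsCarlesonBound ((μH[1] : Measure ℂ).restrict Γ) M →
      ∀ (ι : Type) (_ : Countable ι) (γ : ι → Set ℂ) (ζ : ι → ℂ),
        (∀ j, γ j ⊆ Γ) →
        (∀ j, IsCompact (γ j)) →
        (∀ j, IsConnected (γ j)) →
        Pairwise (Function.onFun Disjoint γ) →
        (∀ j, 1 ≤ ∫⁻ w in γ j,
          ENNReal.ofReal (1 / (1 - ‖w‖ ^ 2)) ∂(μH[1] : Measure ℂ)) →
        (∀ j, ζ j ∈ γ j) →
        IsCarlesonBound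
          (MeasureTheory.Measure.sum fun j =>
            (ENNReal.ofReal (1 - ‖ζ j‖)) • MeasureTheory.Measure.dirac (ζ j))
          (C * M) := by
  refine ⟨18, by norm_num, ?_⟩
  intro Γ hΓ ⟨c, hΓc, hc⟩ M hM hC ι _ γ ζ hγΓ hγc hγconn hdisj hlen hζγ θ₀ ℓ hθ₀ hℓ0 hℓ1
  have hΓm : MeasurableSet Γ := hΓc ▸ .iUnion fun n => (hc n).isCompact.measurableSet
  have hν {T : Set ℂ} := sum_dirac_apply_le_two_mul_hausdorffMeasure (S := carlesonSquare θ₀ ℓ)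
    (T := T ∩ Γ) (fun j => (hγc j).measurableSet) (fun j => (hγconn j).isPreconnected) hdisj
    hlen hζγ fun j => mem_ball_zero_iff.1 (hΓ (hγΓ j (hζγ j)))
  suffices h : _ ≤ 2 * ENNReal.ofReal (9 * M * ℓ) by
    rwa [← ENNReal.ofReal_ofNat 2, ← ENNReal.ofReal_mul zero_le_two, ← mul_assoc, ← mul_assoc,
      show (2 : ℝ) * 9 = 18 by norm_num] at h
  rcases lt_or_ge ℓ (1 / 3) with hsmall | hbig
  · calc _ ≤ 2 * μH[1] (carlesonSquare θ₀ (3 * ℓ) ∩ Γ) := hν fun j hj =>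
          subset_inter (inter_subset_right.trans
            (closedBall_subset_carlesonSquare_three_mul hsmall hj))
            (inter_subset_left.trans (hγΓ j))
      _ ≤ 2 * ENNReal.ofReal (M * (3 * ℓ)) := by
          rw [← Measure.restrict_apply' hΓm]
          gcongr
          exact hC θ₀ _ hθ₀ (by positivity) (by linarith)
      _ ≤ 2 * ENNReal.ofReal (9 * M * ℓ) := by gcongr 2 * ENNReal.ofReal ?_; nlinarith
  · calc _ ≤ 2 * μH[1] (univ ∩ Γ) := hν fun j _ =>
          subset_inter (subset_univ _) (inter_subset_left.trans (hγΓ j))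
      _ ≤ 2 * ENNReal.ofReal (2 * M) := by
          rw [univ_inter]
          gcongr
          exact hausdorffMeasure_le_of_isCarlesonBound hΓ hΓm hM hC
      _ ≤ 2 * ENNReal.ofReal (9 * M * ℓ) := by gcongr 2 * ENNReal.ofReal ?_; nlinarith
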